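/- arXiv:1612.04752 — 3 statements merged into one kernel-verified Lean document; each statement's English description precedes it below -/
import Mathlib

section
/- Let U ⊆ ℂ² be open, K ⊆ U compact and convex, and Φ : U → ℂ² holomorphic such that for every p ∈ U the derivative DΦ(p) is symplectic, i.e. ω(DΦ(p)u, DΦ(p)v) = ω(u,v) for all u,v ∈ ℂ². Let c ∈ ℝ, s₀ > 0, M > 0, let Ω ⊆ ℂ be an open set containing the ray {c − i s : s ≥ s₀}, and let W⁺, W⁻ : Ω → ℂ² be holomorphic with W⁺(c − i s), W⁻(c − i s) ∈ K for all s ≥ s₀. Set δ₀ = W⁺ − W⁻ and assume ‖δ₀(c − i s)‖ ≤ M e^{−2π s} and ‖(W⁻)'(c − i s)‖ ≤ M for all s ≥ s₀, and that the limit θ_F := lim_{s→∞} e^{2π i (c − i s)} ω(δ₀(c − i s), (W⁻)'(c − i s)) exists. Define V^±(t) = Φ(W^±(t + c)). Then the limit lim_{s→∞} e^{2π i(−i s)} ω(V⁺(−i s) − V⁻(−i s), (V⁻)'(−i s)) exists and equals e^{−2π i c} θ_F; in particular its absolute value equals |θ_F|. -/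
/-!
Write `Φ(W⁺) - Φ(W⁻) = DΦ(W⁻) δ₀ + ρ`. Cauchy estimates on a closed thickening of `K` inside `U`
bound `DΦ` uniformly on `K` and give `‖ρ‖ = O(‖δ₀‖²) = O(e^{-4πs})`. By the chain rule
`(V⁻)' = DΦ(W⁻) (W⁻)'`, so symplecticity of `DΦ` turns the main term into `ω(δ₀, (W⁻)')`, while the
error term, even after multiplication by `|e^{2πi(-is)}| = e^{2πs}`, is `O(e^{-2πs})`. The shift
`t ↦ t + c` only multiplies the exponential prefactor by `e^{-2πic}`.
-/

open Filter

/-- The standard symplectic form on `ℂ²`: `ω(u,v) = u₁v₂ − u₂v₁`. -/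
noncomputable def symp (u v : ℂ × ℂ) : ℂ := u.1 * v.2 - u.2 * v.1

open Metric Topology Set

theorem symp_add_left (u w v : ℂ × ℂ) : symp (u + w) v = symp u v + symp w v := by
  simp only [symp, Prod.fst_add, Prod.snd_add]; ring

theorem norm_symp_le (u v : ℂ × ℂ) : ‖symp u v‖ ≤ 2 * (‖u‖ * ‖v‖) := by
  have h₁ : ‖u.1 * v.2‖ ≤ ‖u‖ * ‖v‖ := by
    rw [norm_mul]; gcongr
    exacts [norm_fst_le u, norm_snd_le v]
  have h₂ : ‖u.2 * v.1‖ ≤ ‖u‖ * ‖v‖ := by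
    rw [norm_mul]; gcongr
    exacts [norm_snd_le u, norm_fst_le v]
  calc ‖symp u v‖ ≤ ‖u.1 * v.2‖ + ‖u.2 * v.1‖ := norm_sub_le _ _
    _ ≤ 2 * (‖u‖ * ‖v‖) := by linarith

theorem symp_eq_add_of_symplectic {L : ℂ × ℂ →L[ℂ] ℂ × ℂ} (hL : ∀ u v, symp (L u) (L v) = symp u v)
    (x y v : ℂ × ℂ) : symp x (L v) = symp y v + symp (x - L y) (L v) := by
  rw [← hL y v, ← symp_add_left, add_sub_cancel]

section CauchyEstimates

variable {E F : Type*} [NormedAddCommGroup E] [NormedSpace ℂ E]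
  [NormedAddCommGroup F] [NormedSpace ℂ F]

theorem mapsTo_add_smul_closedBall (b : E) {w : E} (hw : w ≠ 0) (r : ℝ) :
    MapsTo (fun z : ℂ => b + z • w) (closedBall 0 (r / ‖w‖)) (closedBall b r) := by
  intro z hz
  have hw' : 0 < ‖w‖ := norm_pos_iff.mpr hw
  rw [mem_closedBall_zero_iff, le_div_iff₀ hw'] at hz
  rwa [mem_closedBall_iff_norm, add_sub_cancel_left, norm_smul]

theorem hasDerivAt_add_smul_zero {Φ : E → F} {b : E} (hΦ : DifferentiableAt ℂ Φ b) (w : E) :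
    HasDerivAt (fun z : ℂ => Φ (b + z • w)) (fderiv ℂ Φ b w) 0 := by
  have hline : HasDerivAt (fun z : ℂ => b + z • w) w 0 := by
    simpa using ((hasDerivAt_id (0 : ℂ)).smul_const w).const_add b
  have hΦ₀ : HasFDerivAt Φ (fderiv ℂ Φ b) (b + (0 : ℂ) • w) := by simpa using hΦ.hasFDerivAt
  exact hΦ₀.comp_hasDerivAt 0 hline

theorem deriv_comp_comp_add_const {Φ : E → F} {W : ℂ → E} {t a : ℂ}
    (hΦ : DifferentiableAt ℂ Φ (W (t + a))) (hW : DifferentiableAt ℂ W (t + a)) :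
    deriv (fun t => Φ (W (t + a))) t = fderiv ℂ Φ (W (t + a)) (deriv W (t + a)) := by
  rw [deriv_comp_add_const (fun t => Φ (W t))]
  exact fderiv_comp_deriv _ hΦ hW

variable [CompleteSpace F]

/-- By the maximum principle it suffices to bound `(f z - f c) / (z - c)` on the boundary sphere. -/
theorem norm_dslope_le_of_forall_norm_le {f : ℂ → F} {c : ℂ} {R C : ℝ} (hR : 0 < R)
    (hf : DifferentiableOn ℂ f (closedBall c R)) (hC : ∀ z ∈ closedBall c R, ‖f z‖ ≤ C) :
    ∀ z ∈ closedBall c R, ‖dslope f c z‖ ≤ 2 * C / R := by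
  have hd : DifferentiableOn ℂ (dslope f c) (closedBall c R) :=
    (Complex.differentiableOn_dslope (closedBall_mem_nhds c hR)).mpr hf
  intro z hz
  refine Complex.norm_le_of_forall_mem_frontier_norm_le isBounded_ball
    (hd.diffContOnCl_ball subset_rfl) ?_ (by rwa [closure_ball c hR.ne'])
  intro w hw
  rw [frontier_ball c hR.ne'] at hw
  have hwc : ‖w - c‖ = R := mem_sphere_iff_norm.mp hw
  have hne : w ≠ c := by
    rintro rfl
    simp only [sub_self, norm_zero] at hwc
    exact hR.ne hwc
  rw [dslope_of_ne f hne, slope_def_module, norm_smul, norm_inv, hwc]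
  calc R⁻¹ * ‖f w - f c‖ ≤ R⁻¹ * (C + C) := by
        gcongr
        exact norm_sub_le_of_le (hC w (sphere_subset_closedBall hw))
          (hC c (mem_closedBall_self hR.le))
    _ = 2 * C / R := by ring

variable {Φ : E → F} {b : E} {r B : ℝ}

/-- Both estimates come from the slice `z ↦ Φ (b + z • w)` on the disc of radius `r / ‖w‖`:
its first divided difference at `0` is `DΦ(b) w`, and its second one, evaluated at `1`,
is the Taylor remainder. -/
theorem norm_fderiv_apply_le_and_norm_taylor_le (hr : 0 < r)
    (hΦ : DifferentiableOn ℂ Φ (closedBall b r)) (hB : ∀ x ∈ closedBall b r, ‖Φ x‖ ≤ B) (w : E) :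
    ‖fderiv ℂ Φ b w‖ ≤ 2 * B / r * ‖w‖ ∧
      (‖w‖ ≤ r → ‖Φ (b + w) - Φ b - fderiv ℂ Φ b w‖ ≤ 4 * B / r ^ 2 * ‖w‖ ^ 2) := by
  rcases eq_or_ne w 0 with rfl | hw
  · simp
  have hw' : 0 < ‖w‖ := norm_pos_iff.mpr hw
  have hR : 0 < r / ‖w‖ := div_pos hr hw'
  set g : ℂ → F := fun z => Φ (b + z • w)
  have hmaps := mapsTo_add_smul_closedBall b hw r
  have hg : DifferentiableOn ℂ g (closedBall 0 (r / ‖w‖)) :=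
    hΦ.comp (by fun_prop) hmaps
  have hgB : ∀ z ∈ closedBall 0 (r / ‖w‖), ‖g z‖ ≤ B := fun z hz => hB _ (hmaps hz)
  have hg₀ : dslope g 0 0 = fderiv ℂ Φ b w := by
    rw [dslope_same]
    exact (hasDerivAt_add_smul_zero (hΦ.differentiableAt (closedBall_mem_nhds b hr)) w).deriv
  have h₁ := norm_dslope_le_of_forall_norm_le hR hg hgB
  have h₂ := norm_dslope_le_of_forall_norm_le hR
    ((Complex.differentiableOn_dslope (closedBall_mem_nhds 0 hR)).mpr hg) h₁
  refine ⟨?_, fun hwr => ?_⟩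
  · calc ‖fderiv ℂ Φ b w‖ ≤ 2 * B / (r / ‖w‖) := hg₀ ▸ h₁ 0 (mem_closedBall_self hR.le)
      _ = 2 * B / r * ‖w‖ := by field_simp
  · have h1R : (1 : ℂ) ∈ closedBall 0 (r / ‖w‖) := by
      simpa [mem_closedBall_zero_iff] using (one_le_div hw').mpr hwr
    have hval : dslope (dslope g 0) 0 1 = Φ (b + w) - Φ b - fderiv ℂ Φ b w := by
      rw [dslope_of_ne _ one_ne_zero, slope_def_module, dslope_of_ne _ one_ne_zero,
        slope_def_module, hg₀]
      simp [g]
    calc ‖Φ (b + w) - Φ b - fderiv ℂ Φ b w‖ ≤ 2 * (2 * B / (r / ‖w‖)) / (r / ‖w‖) :=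
          hval ▸ h₂ 1 h1R
      _ = 4 * B / r ^ 2 * ‖w‖ ^ 2 := by field_simp; ring

theorem exists_uniform_cauchy_estimates [ProperSpace E] {U K : Set E} (hU : IsOpen U)
    (hK : IsCompact K) (hKU : K ⊆ U) (hΦ : DifferentiableOn ℂ Φ U) :
    ∃ r > 0, ∃ A, 0 ≤ A ∧ ∀ p ∈ K, ∀ w : E, ‖fderiv ℂ Φ p w‖ ≤ A * ‖w‖ ∧
      (‖w‖ ≤ r → ‖Φ (p + w) - Φ p - fderiv ℂ Φ p w‖ ≤ A * ‖w‖ ^ 2) := by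
  obtain ⟨r, hr, hrU⟩ := hK.exists_cthickening_subset_open hU hKU
  obtain ⟨B₀, hB₀⟩ := hK.cthickening.exists_bound_of_continuousOn (hΦ.continuousOn.mono hrU)
  set B := max B₀ 0
  have hB : 0 ≤ B := le_max_right _ _
  refine ⟨r, hr, 2 * B / r + 4 * B / r ^ 2, by positivity, fun p hp w => ?_⟩
  have hball := closedBall_subset_cthickening hp r
  obtain ⟨hD, hT⟩ := norm_fderiv_apply_le_and_norm_taylor_le hr (hΦ.mono (hball.trans hrU))
    (fun x hx => (hB₀ x (hball hx)).trans (le_max_left _ _)) w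
  refine ⟨hD.trans ?_, fun hw => (hT hw).trans ?_⟩ <;> gcongr
  exacts [le_add_of_nonneg_right (by positivity), le_add_of_nonneg_left (by positivity)]

end CauchyEstimates

theorem norm_exp_two_pi_I_mul_neg_I_mul (s : ℝ) :
    ‖Complex.exp (2 * Real.pi * Complex.I * (-(Complex.I * s)))‖ = Real.exp (2 * Real.pi * s) := by
  rw [Complex.norm_exp]
  simp

theorem tendsto_exp_mul_norm_symp_remainder {U K : Set (ℂ × ℂ)} {Φ : ℂ × ℂ → ℂ × ℂ}
    (hU : IsOpen U) (hK : IsCompact K) (hKU : K ⊆ U) (hΦ : DifferentiableOn ℂ Φ U)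
    {a M : ℝ} (ha : 0 < a) {p q v : ℝ → ℂ × ℂ} (hp : ∀ᶠ s in atTop, p s ∈ K)
    (hqp : ∀ᶠ s in atTop, ‖q s - p s‖ ≤ M * Real.exp (-a * s))
    (hv : ∀ᶠ s in atTop, ‖v s‖ ≤ M) :
    Tendsto (fun s => Real.exp (a * s) *
      ‖symp (Φ (q s) - Φ (p s) - fderiv ℂ Φ (p s) (q s - p s)) (fderiv ℂ Φ (p s) (v s))‖)
      atTop (𝓝 0) := by
  obtain ⟨r, hr, A, hA, hest⟩ := exists_uniform_cauchy_estimates hU hK hKU hΦ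
  have hdecay : Tendsto (fun s : ℝ => Real.exp (-a * s)) atTop (𝓝 0) :=
    Real.tendsto_exp_atBot.comp <| (tendsto_const_mul_atBot_of_neg (by linarith)).mpr tendsto_id
  have hsmall : ∀ᶠ s in atTop, M * Real.exp (-a * s) ≤ r := by
    have h := hdecay.const_mul M
    rw [mul_zero] at h
    exact h.eventually (eventually_le_nhds hr)
  have hbound := hdecay.const_mul (2 * A ^ 2 * M ^ 3)
  rw [mul_zero] at hbound
  refine squeeze_zero' (Eventually.of_forall fun s => by positivity) ?_ hbound
  filter_upwards [hp, hqp, hv, hsmall] with s hps hqps hvs hsmalls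
  obtain ⟨-, hrem⟩ := hest (p s) hps (q s - p s)
  have hX : ‖Φ (q s) - Φ (p s) - fderiv ℂ Φ (p s) (q s - p s)‖ ≤
      A * (M * Real.exp (-a * s)) ^ 2 := by
    have := hrem (hqps.trans hsmalls)
    rw [add_sub_cancel] at this
    exact this.trans (by gcongr)
  have hY : ‖fderiv ℂ Φ (p s) (v s)‖ ≤ A * M := ((hest (p s) hps (v s)).1).trans (by gcongr)
  have hexp : Real.exp (a * s) * Real.exp (-a * s) ^ 2 = Real.exp (-a * s) := by
    rw [sq, ← Real.exp_add, ← Real.exp_add]; ring_nf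
  calc Real.exp (a * s) * ‖symp _ _‖
      ≤ Real.exp (a * s) * (2 * (A * (M * Real.exp (-a * s)) ^ 2 * (A * M))) := by
        gcongr
        exact (norm_symp_le _ _).trans (by gcongr)
    _ = 2 * A ^ 2 * M ^ 3 * (Real.exp (a * s) * Real.exp (-a * s) ^ 2) := by ring
    _ = 2 * A ^ 2 * M ^ 3 * Real.exp (-a * s) := by rw [hexp]

theorem stokes_constant_invariant_general
    (U : Set (ℂ × ℂ)) (hU : IsOpen U)
    (K : Set (ℂ × ℂ)) (hK : IsCompact K) (hKU : K ⊆ U)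
    (Φ : ℂ × ℂ → ℂ × ℂ) (hΦ : DifferentiableOn ℂ Φ U)
    (hsymp : ∀ p ∈ U, ∀ u v : ℂ × ℂ,
      symp (fderiv ℂ Φ p u) (fderiv ℂ Φ p v) = symp u v)
    (c : ℝ) (s₀ : ℝ) (M : ℝ)
    (Ω : Set ℂ) (hΩ : IsOpen Ω)
    (hray : ∀ s : ℝ, s₀ ≤ s → ((c : ℂ) - Complex.I * (s : ℂ)) ∈ Ω)
    (Wp Wm : ℂ → ℂ × ℂ)
    (hWm : DifferentiableOn ℂ Wm Ω)
    (hWmK : ∀ s : ℝ, s₀ ≤ s → Wm ((c : ℂ) - Complex.I * (s : ℂ)) ∈ K)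
    (hδ : ∀ s : ℝ, s₀ ≤ s →
      ‖Wp ((c : ℂ) - Complex.I * (s : ℂ)) - Wm ((c : ℂ) - Complex.I * (s : ℂ))‖ ≤
        M * Real.exp (-(2 * Real.pi) * s))
    (hW' : ∀ s : ℝ, s₀ ≤ s → ‖deriv Wm ((c : ℂ) - Complex.I * (s : ℂ))‖ ≤ M)
    (θF : ℂ)
    (hθ : Tendsto (fun s : ℝ =>
        Complex.exp (2 * Real.pi * Complex.I * ((c : ℂ) - Complex.I * (s : ℂ))) *
          symp (Wp ((c : ℂ) - Complex.I * (s : ℂ)) - Wm ((c : ℂ) - Complex.I * (s : ℂ)))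
            (deriv Wm ((c : ℂ) - Complex.I * (s : ℂ))))
        atTop (nhds θF)) :
    Tendsto (fun s : ℝ =>
        Complex.exp (2 * Real.pi * Complex.I * (-(Complex.I * (s : ℂ)))) *
          symp (Φ (Wp (-(Complex.I * (s : ℂ)) + (c : ℂ))) -
                Φ (Wm (-(Complex.I * (s : ℂ)) + (c : ℂ))))
            (deriv (fun t : ℂ => Φ (Wm (t + (c : ℂ)))) (-(Complex.I * (s : ℂ)))))
      atTop (nhds (Complex.exp (-(2 * Real.pi * Complex.I * (c : ℂ))) * θF)) ∧
    ‖Complex.exp (-(2 * Real.pi * Complex.I * (c : ℂ))) * θF‖ =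
      ‖θF‖ := by
  have hphase : ‖Complex.exp (-(2 * Real.pi * Complex.I * (c : ℂ)))‖ = 1 := by
    rw [Complex.norm_exp]; simp
  refine ⟨?_, by rw [norm_mul, hphase, one_mul]⟩
  set z : ℝ → ℂ := fun s => (c : ℂ) - Complex.I * (s : ℂ)
  have hrem := tendsto_exp_mul_norm_symp_remainder hU hK hKU hΦ Real.two_pi_pos
    (p := fun s => Wm (z s)) (q := fun s => Wp (z s)) (v := fun s => deriv Wm (z s))
    (eventually_atTop.2 ⟨s₀, hWmK⟩) (eventually_atTop.2 ⟨s₀, hδ⟩) (eventually_atTop.2 ⟨s₀, hW'⟩)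
  have hE : Tendsto (fun s : ℝ => Complex.exp (2 * Real.pi * Complex.I * (-(Complex.I * (s : ℂ)))) *
      symp (Φ (Wp (z s)) - Φ (Wm (z s)) - fderiv ℂ Φ (Wm (z s)) (Wp (z s) - Wm (z s)))
        (fderiv ℂ Φ (Wm (z s)) (deriv Wm (z s)))) atTop (𝓝 0) := by
    rw [tendsto_zero_iff_norm_tendsto_zero]
    simpa only [norm_mul, norm_exp_two_pi_I_mul_neg_I_mul] using hrem
  have hlim := (hθ.const_mul (Complex.exp (-(2 * Real.pi * Complex.I * (c : ℂ))))).add hE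
  rw [add_zero] at hlim
  refine hlim.congr' ?_
  filter_upwards [eventually_ge_atTop s₀] with s hs
  have hzs : -(Complex.I * (s : ℂ)) + (c : ℂ) = z s := by ring
  have hWmU : Wm (z s) ∈ U := hKU (hWmK s hs)
  have hchain := deriv_comp_comp_add_const (t := -(Complex.I * (s : ℂ))) (a := (c : ℂ))
    (hzs ▸ hΦ.differentiableAt (hU.mem_nhds hWmU))
    (hzs ▸ hWm.differentiableAt (hΩ.mem_nhds (hray s hs)))
  have hshift : Complex.exp (-(2 * Real.pi * Complex.I * (c : ℂ))) *
      Complex.exp (2 * Real.pi * Complex.I * z s) =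
      Complex.exp (2 * Real.pi * Complex.I * (-(Complex.I * (s : ℂ)))) := by
    rw [← Complex.exp_add]; congr 1; simp only [z]; ring
  rw [hchain, hzs, symp_eq_add_of_symplectic (hsymp _ hWmU) (Φ (Wp (z s)) - Φ (Wm (z s)))
    (Wp (z s) - Wm (z s)), ← hshift]
  ring

/-- Invariance of (the modulus of) the Stokes constant under analytic symplectic
conjugation. -/
theorem stokes_constant_invariant
    (U : Set (ℂ × ℂ)) (hU : IsOpen U)
    (K : Set (ℂ × ℂ)) (hK : IsCompact K) (hKconv : Convex ℝ K) (hKU : K ⊆ U)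
    (Φ : ℂ × ℂ → ℂ × ℂ) (hΦ : DifferentiableOn ℂ Φ U)
    (hsymp : ∀ p ∈ U, ∀ u v : ℂ × ℂ,
      symp (fderiv ℂ Φ p u) (fderiv ℂ Φ p v) = symp u v)
    (c : ℝ) (s₀ : ℝ) (hs₀ : 0 < s₀) (M : ℝ) (hM : 0 < M)
    (Ω : Set ℂ) (hΩ : IsOpen Ω)
    (hray : ∀ s : ℝ, s₀ ≤ s → ((c : ℂ) - Complex.I * (s : ℂ)) ∈ Ω)
    (Wp Wm : ℂ → ℂ × ℂ)
    (hWp : DifferentiableOn ℂ Wp Ω) (hWm : DifferentiableOn ℂ Wm Ω)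
    (hWpK : ∀ s : ℝ, s₀ ≤ s → Wp ((c : ℂ) - Complex.I * (s : ℂ)) ∈ K)
    (hWmK : ∀ s : ℝ, s₀ ≤ s → Wm ((c : ℂ) - Complex.I * (s : ℂ)) ∈ K)
    (hδ : ∀ s : ℝ, s₀ ≤ s →
      ‖Wp ((c : ℂ) - Complex.I * (s : ℂ)) - Wm ((c : ℂ) - Complex.I * (s : ℂ))‖ ≤
        M * Real.exp (-(2 * Real.pi) * s))
    (hW' : ∀ s : ℝ, s₀ ≤ s → ‖deriv Wm ((c : ℂ) - Complex.I * (s : ℂ))‖ ≤ M)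
    (θF : ℂ)
    (hθ : Tendsto (fun s : ℝ =>
        Complex.exp (2 * Real.pi * Complex.I * ((c : ℂ) - Complex.I * (s : ℂ))) *
          symp (Wp ((c : ℂ) - Complex.I * (s : ℂ)) - Wm ((c : ℂ) - Complex.I * (s : ℂ)))
            (deriv Wm ((c : ℂ) - Complex.I * (s : ℂ))))
        atTop (nhds θF)) :
    Tendsto (fun s : ℝ =>
        Complex.exp (2 * Real.pi * Complex.I * (-(Complex.I * (s : ℂ)))) *
          symp (Φ (Wp (-(Complex.I * (s : ℂ)) + (c : ℂ))) -
                Φ (Wm (-(Complex.I * (s : ℂ)) + (c : ℂ))))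
            (deriv (fun t : ℂ => Φ (Wm (t + (c : ℂ)))) (-(Complex.I * (s : ℂ)))))
      atTop (nhds (Complex.exp (-(2 * Real.pi * Complex.I * (c : ℂ))) * θF)) ∧
    ‖Complex.exp (-(2 * Real.pi * Complex.I * (c : ℂ))) * θF‖ =
      ‖θF‖ :=
  stokes_constant_invariant_general U hU K hK hKU Φ hΦ hsymp c s₀ M Ω hΩ hray Wp Wm hWm hWmK hδ hW'
    θF hθ
end

section
/- Let m ∈ ℕ and let x be a nonzero real number. Define (m+1) × (m+1) real matrices (indices from 0 to m): A with A_{0,0} = x/√3, A_{j,j} = 1/2 − j for 1 ≤ j ≤ m, A_{j−1,j} = 1/2 + j for 1 ≤ j ≤ m, and all other entries 0; B = −(2/√3) · Id; C with C_{0,0} = x and all other entries 0; and D with D_{j,j} = −(j+1) for 0 ≤ j ≤ m, D_{j,j+1} = j+1 for 0 ≤ j ≤ m−1, and all other entries 0. Then the 2(m+1) × 2(m+1) block matrix M = [[A, B],[C, D]] is invertible. -/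
/-!
All four blocks are upper triangular and `D` has nonzero diagonal, so the Schur complement
`A - B D⁻¹ C` is upper triangular with diagonal `A i i - B i i C i i / D i i`. Hence
`det M = ∏ i, (A i i D i i - B i i C i i)`: the determinant is the product of the `2 × 2`
determinants read off along the diagonals of the blocks. Here these are `x / √3` for `i = 0`
and `(i - 1/2)(i + 1)` for `i ≥ 1`, all nonzero.
-/

namespace Matrix

variable {n : Type*} [Fintype n] [LinearOrder n]

theorem IsUpperTriangular.mul_apply_self {R : Type*} [NonUnitalNonAssocSemiring R]
    {A B : Matrix n n R} (hA : A.IsUpperTriangular) (hB : B.IsUpperTriangular) (i : n) :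
    (A * B) i i = A i i * B i i := by
  rw [mul_apply, Finset.sum_eq_single i]
  · intro k _ hki
    rcases lt_or_gt_of_ne hki with hlt | hgt
    · rw [hA hlt, zero_mul]
    · rw [hB hgt, mul_zero]
  · simp

variable {K : Type*} [Field K]

theorem IsUpperTriangular.apply_self_ne_zero {A : Matrix n n K} (hA : A.IsUpperTriangular)
    (hdet : IsUnit A.det) (i : n) : A i i ≠ 0 := by
  rw [isUnit_iff_ne_zero, det_of_isUpperTriangular hA, Finset.prod_ne_zero_iff] at hdet
  exact hdet i (Finset.mem_univ i)

theorem IsUpperTriangular.inv_apply_self {A : Matrix n n K} (hA : A.IsUpperTriangular)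
    (hdet : IsUnit A.det) (i : n) : A⁻¹ i i = (A i i)⁻¹ := by
  have : Invertible A := invertibleOfIsUnitDet A hdet
  have hAinv : A⁻¹.IsUpperTriangular := blockTriangular_inv_of_blockTriangular hA
  refine eq_inv_of_mul_eq_one_right ?_
  rw [← hA.mul_apply_self hAinv, mul_nonsing_inv A hdet, one_apply_eq]

theorem det_fromBlocks_of_isUpperTriangular {A B C D : Matrix n n K}
    (hA : A.IsUpperTriangular) (hB : B.IsUpperTriangular) (hC : C.IsUpperTriangular)
    (hD : D.IsUpperTriangular) (hdet : IsUnit D.det) :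
    (fromBlocks A B C D).det = ∏ i, (A i i * D i i - B i i * C i i) := by
  have : Invertible D := invertibleOfIsUnitDet D hdet
  have hDinv : D⁻¹.IsUpperTriangular := blockTriangular_inv_of_blockTriangular hD
  have hBDinv : (B * D⁻¹).IsUpperTriangular := hB.mul hDinv
  have hSchur : (A - B * D⁻¹ * C).IsUpperTriangular := hA.sub (hBDinv.mul hC)
  rw [det_fromBlocks₂₂, invOf_eq_nonsing_inv, det_of_isUpperTriangular hD,
    det_of_isUpperTriangular hSchur, ← Finset.prod_mul_distrib]
  refine Finset.prod_congr rfl fun i _ => ?_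
  have hDi := hD.apply_self_ne_zero hdet i
  rw [sub_apply, hBDinv.mul_apply_self hC, hB.mul_apply_self hDinv,
    hD.inv_apply_self hdet]
  field_simp

end Matrix

/-- Invertibility of the block matrix `M = [[A, B],[C, D]]` arising in the linear
systems determining the coefficients of the formal separatrix at even orders. -/
theorem block_matrix_invertible (m : ℕ) (x : ℝ) (hx : x ≠ 0)
    (A B C D : Matrix (Fin (m + 1)) (Fin (m + 1)) ℝ)
    (hA : ∀ i j : Fin (m + 1),
      A i j =
        if (j : ℕ) = (i : ℕ) then
          (if (i : ℕ) = 0 then x / Real.sqrt 3 else (1 : ℝ) / 2 - ((i : ℕ) : ℝ))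
        else if (j : ℕ) = (i : ℕ) + 1 then (1 : ℝ) / 2 + ((j : ℕ) : ℝ) else 0)
    (hB : B = (-(2 / Real.sqrt 3)) • (1 : Matrix (Fin (m + 1)) (Fin (m + 1)) ℝ))
    (hC : ∀ i j : Fin (m + 1),
      C i j = if (i : ℕ) = 0 ∧ (j : ℕ) = 0 then x else 0)
    (hD : ∀ i j : Fin (m + 1),
      D i j = if (j : ℕ) = (i : ℕ) then -(((i : ℕ) : ℝ) + 1)
        else if (j : ℕ) = (i : ℕ) + 1 then ((i : ℕ) : ℝ) + 1 else 0) :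
    IsUnit (Matrix.fromBlocks A B C D) := by
  have hAt : A.IsUpperTriangular := fun i j (hij : j < i) => by
    rw [hA, if_neg (by omega), if_neg (by omega)]
  have hBt : B.IsUpperTriangular := fun i j (hij : j < i) => by
    rw [hB, Matrix.smul_apply, Matrix.one_apply_ne hij.ne', smul_zero]
  have hCt : C.IsUpperTriangular := fun i j (hij : j < i) => by
    rw [hC, if_neg (by omega)]
  have hDt : D.IsUpperTriangular := fun i j (hij : j < i) => by
    rw [hD, if_neg (by omega), if_neg (by omega)]
  have hDdet : IsUnit D.det := by
    rw [isUnit_iff_ne_zero, Matrix.det_of_isUpperTriangular hDt, Finset.prod_ne_zero_iff]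
    intro i _
    rw [hD, if_pos rfl]
    exact neg_ne_zero.mpr (by positivity)
  rw [Matrix.isUnit_iff_isUnit_det,
    Matrix.det_fromBlocks_of_isUpperTriangular hAt hBt hCt hDt hDdet, isUnit_iff_ne_zero,
    Finset.prod_ne_zero_iff]
  intro i _
  simp only [hA, hB, hC, hD, Matrix.smul_apply, Matrix.one_apply_eq, smul_eq_mul, mul_one,
    and_self, ↓reduceIte]
  split_ifs with hi
  · calc x / Real.sqrt 3 * -(((i : ℕ) : ℝ) + 1) - -(2 / Real.sqrt 3) * x
        = x / Real.sqrt 3 := by rw [hi]; field_simp; ring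
      _ ≠ 0 := div_ne_zero hx (by positivity)
  · have hi1 : (1 : ℝ) ≤ (i : ℕ) := by exact_mod_cast Nat.one_le_iff_ne_zero.mpr hi
    rw [mul_zero, sub_zero]
    exact (mul_pos_of_neg_of_neg (by linarith) (by linarith)).ne'
end

section
/- Let α, β ≥ 1 and let D = {z ∈ ℂ : |Re z| ≤ α, |Im z| ≤ β} be the closed rectangle. Let g : D → ℂ and let g₀ ∈ ℂ and (g_n)_{n≥1} be complex numbers such that g(τ) = g₀ + ∑_{n≥1} g_n e^{−2π n i τ} + ∑_{n≥1} conj(g_n) e^{2π n i τ} for all τ ∈ D, with both series converging uniformly on D. Then |g_n| ≤ ‖g‖_D e^{−2π β n} for every n ≥ 1. If moreover there exists a real τ_h ∈ [−α, α] with g(τ_h) = 0, then |g₀| ≤ 4 ‖g‖_D e^{−2π β}. -/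
/-!
Integrating `g (t + iβ) e^{2πin(t + iβ)}` over one period picks out `g_n`, and on the line
`Im τ = β` the weight has modulus `e^{-2πβn}`; this gives `|g_n| ≤ ‖g‖_D e^{-2πβn}`. Rather than
integrating the series term by term, we apply this to its partial sums, which are uniformly
close to `g` on `D`. At a real zero `τ_h` of `g` we have
`g₀ = -∑ (g_n e^{-2πinτ_h} + conj g_n e^{2πinτ_h})`, a sum of terms of size at most `‖g‖_D qⁿ`
with `q = e^{-2πβ} ≤ 1/2`, hence `|g₀| ≤ 2 ‖g‖_D q / (1 - q) ≤ 4 ‖g‖_D q`.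
-/

open Filter

def rect (α β : ℝ) : Set ℂ := {z : ℂ | |z.re| ≤ α ∧ |z.im| ≤ β}

open Complex Finset
open scoped Real Topology

lemma le_biSup_of_bddAbove_image {α β : Type*} [ConditionallyCompleteLattice α] {f : β → α}
    {s : Set β} (hf : BddAbove (f '' s)) {x : β} (hx : x ∈ s) : f x ≤ ⨆ y ∈ s, f y :=
  le_ciSup₂ (f := fun y (_ : y ∈ s) => f y)
    (hf.mono (Set.iUnion_subset fun _ => Set.range_subset_iff.2 (Set.mem_image_of_mem f))) x hx

lemma TendstoUniformlyOn.eventually_forall_norm_le {ι α E : Type*} [SeminormedAddGroup E]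
    {F : ι → α → E} {f : α → E} {p : Filter ι} {s : Set α} {M C : ℝ}
    (h : TendstoUniformlyOn F f p s) (hf : ∀ x ∈ s, ‖f x‖ ≤ M) (hMC : M < C) :
    ∀ᶠ i in p, ∀ x ∈ s, ‖F i x‖ ≤ C :=
  (uniformContinuous_norm.comp_tendstoUniformlyOn h).eventually_forall_le hMC hf

lemma sum_Icc_one_pow_le_two_mul {q : ℝ} (hq0 : 0 ≤ q) (hq : q ≤ 1 / 2) (N : ℕ) :
    ∑ n ∈ Icc 1 N, q ^ n ≤ 2 * q := by
  rw [← Ico_add_one_right_eq_Icc]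
  refine (geom_sum_Ico_le_of_lt_one hq0 (by linarith)).trans ?_
  rw [pow_one, div_le_iff₀ (by linarith)]
  nlinarith

lemma exp_neg_two_pi_mul_le_half {β : ℝ} (hβ : 1 ≤ β) : Real.exp (-(2 * π * β)) ≤ 1 / 2 := by
  refine le_trans ?_ Real.exp_neg_one_lt_half.le
  gcongr
  nlinarith [Real.pi_gt_three]

noncomputable def fourierMode (k : ℤ) (τ : ℂ) : ℂ := exp (2 * π * I * k * τ)

@[fun_prop]
lemma continuous_fourierMode (k : ℤ) : Continuous (fourierMode k) := by
  unfold fourierMode; fun_prop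

lemma norm_fourierMode (k : ℤ) (τ : ℂ) :
    ‖fourierMode k τ‖ = Real.exp (-(2 * π * k * τ.im)) := by
  simp [fourierMode, Complex.norm_exp, Complex.mul_re, Complex.mul_im]

lemma integral_fourierMode (k : ℤ) (w : ℂ) :
    ∫ t in (0 : ℝ)..1, fourierMode k (t + w) = if k = 0 then 1 else 0 := by
  split_ifs with hk
  · simp [fourierMode, hk]
  have hc : 2 * π * I * k ≠ 0 := by simp [Real.pi_ne_zero, hk]
  have hsplit (t : ℝ) :
      fourierMode k (t + w) = exp (2 * π * I * k * t) * exp (2 * π * I * k * w) := by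
    rw [fourierMode, ← Complex.exp_add]; ring_nf
  simp only [hsplit, intervalIntegral.integral_mul_const, integral_exp_mul_complex hc]
  have h1 : 2 * π * I * k * ((1 : ℝ) : ℂ) = k * (2 * π * I) := by push_cast; ring
  rw [h1, exp_int_mul_two_pi_mul_I]
  simp

noncomputable def trigPartialSum (c : ℂ) (a b : ℕ → ℂ) (N : ℕ) (τ : ℂ) : ℂ :=
  c + (∑ n ∈ Icc 1 N, a n * exp (-(2 * π * n * I * τ)))
    + ∑ n ∈ Icc 1 N, b n * exp (2 * π * n * I * τ)

section trigPartialSum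

variable (c : ℂ) (a b : ℕ → ℂ) (N : ℕ)

@[fun_prop]
lemma continuous_trigPartialSum : Continuous (trigPartialSum c a b N) := by
  unfold trigPartialSum; fun_prop

lemma trigPartialSum_mul_fourierMode (m : ℤ) (τ : ℂ) :
    trigPartialSum c a b N τ * fourierMode m τ =
      c * fourierMode m τ + (∑ n ∈ Icc 1 N, a n * fourierMode (m - n) τ)
        + ∑ n ∈ Icc 1 N, b n * fourierMode (m + n) τ := by
  have ha (n : ℕ) :
      a n * exp (-(2 * π * n * I * τ)) * fourierMode m τ = a n * fourierMode (m - n) τ := by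
    rw [fourierMode, fourierMode, mul_assoc, ← Complex.exp_add]; push_cast; ring_nf
  have hb (n : ℕ) :
      b n * exp (2 * π * n * I * τ) * fourierMode m τ = b n * fourierMode (m + n) τ := by
    rw [fourierMode, fourierMode, mul_assoc, ← Complex.exp_add]; push_cast; ring_nf
  simp only [trigPartialSum, add_mul, sum_mul, ha, hb]

variable {N}

lemma integral_trigPartialSum_mul_fourierMode {m : ℕ} (hm : 1 ≤ m) (hmN : m ≤ N) (w : ℂ) :
    ∫ t in (0 : ℝ)..1, trigPartialSum c a b N (t + w) * fourierMode m (t + w) = a m := by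
  have hm0 : (m : ℤ) ≠ 0 := by omega
  have hsum (k : ℕ → ℤ) (d : ℕ → ℂ) :
      ∫ t in (0 : ℝ)..1, ∑ n ∈ Icc 1 N, d n * fourierMode (k n) (t + w) =
        ∑ n ∈ Icc 1 N, d n * if k n = 0 then 1 else 0 := by
    rw [intervalIntegral.integral_finsetSum fun n _ =>
      Continuous.intervalIntegrable (by fun_prop) _ _]
    simp only [intervalIntegral.integral_const_mul, integral_fourierMode]
  simp only [trigPartialSum_mul_fourierMode]
  rw [intervalIntegral.integral_add, intervalIntegral.integral_add,
    intervalIntegral.integral_const_mul, hsum, hsum, integral_fourierMode]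
  · have hb0 : ∀ n ∈ Icc 1 N, (b n * if (m : ℤ) + n = 0 then 1 else 0) = 0 := fun n hn => by
      rw [if_neg (by grind), mul_zero]
    rw [sum_eq_zero hb0, if_neg hm0]
    simp [sub_eq_zero, hm, hmN]
  all_goals exact Continuous.intervalIntegrable (by fun_prop) _ _

lemma norm_coeff_le_of_norm_trigPartialSum_le {m : ℕ} (hm : 1 ≤ m) (hmN : m ≤ N) (y C : ℝ)
    (hC : ∀ t ∈ Set.Icc (0 : ℝ) 1, ‖trigPartialSum c a b N (t + y * I)‖ ≤ C) :
    ‖a m‖ ≤ C * Real.exp (-(2 * π * y * m)) := by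
  rw [← integral_trigPartialSum_mul_fourierMode c a b hm hmN (y * I)]
  have hpt : ∀ t ∈ Set.uIoc (0 : ℝ) 1,
      ‖trigPartialSum c a b N (t + y * I) * fourierMode m (t + y * I)‖ ≤
        C * Real.exp (-(2 * π * y * m)) := fun t ht => by
    rw [Set.uIoc_of_le zero_le_one] at ht
    have him : ((t : ℂ) + y * I).im = y := by simp
    rw [norm_mul, norm_fourierMode, him, Int.cast_natCast, mul_right_comm _ (m : ℝ)]
    gcongr
    exact hC t (Set.Ioc_subset_Icc_self ht)
  simpa using intervalIntegral.norm_integral_le_of_norm_le_const hpt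

end trigPartialSum

theorem norm_coeff_le_of_tendstoUniformlyOn {c : ℂ} {a b : ℕ → ℂ} {f : ℂ → ℂ} {s : Set ℂ}
    {y M : ℝ} (h : TendstoUniformlyOn (trigPartialSum c a b) f atTop s)
    (hline : ∀ t ∈ Set.Icc (0 : ℝ) 1, (t : ℂ) + y * I ∈ s) (hf : ∀ x ∈ s, ‖f x‖ ≤ M)
    {m : ℕ} (hm : 1 ≤ m) : ‖a m‖ ≤ M * Real.exp (-(2 * π * y * m)) := by
  have hC : ∀ C > M, ‖a m‖ ≤ C * Real.exp (-(2 * π * y * m)) := fun C hMC => by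
    obtain ⟨N, hN, hmN⟩ :=
      ((h.eventually_forall_norm_le hf hMC).and (eventually_ge_atTop m)).exists
    exact norm_coeff_le_of_norm_trigPartialSum_le c a b hm hmN y C fun t ht => hN _ (hline t ht)
  exact ge_of_tendsto
    (((continuous_id.mul continuous_const).tendsto M).mono_left nhdsWithin_le_nhds)
    (eventually_nhdsWithin_of_forall (s := Set.Ioi M) hC)

lemma norm_le_of_tendsto_sum_Icc {a u : ℕ → ℂ} {S : ℂ} {M q : ℝ} (hM : 0 ≤ M) (hq0 : 0 ≤ q)
    (hq : q ≤ 1 / 2) (ha : ∀ n, 1 ≤ n → ‖a n‖ ≤ M * q ^ n) (hu : ∀ n, ‖u n‖ ≤ 1)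
    (hS : Tendsto (fun N => ∑ n ∈ Icc 1 N, a n * u n) atTop (𝓝 S)) : ‖S‖ ≤ 2 * M * q := by
  refine le_of_tendsto' hS.norm fun N => ?_
  calc ‖∑ n ∈ Icc 1 N, a n * u n‖ ≤ ∑ n ∈ Icc 1 N, M * q ^ n := by
        refine norm_sum_le_of_le _ fun n hn => ?_
        rw [norm_mul]
        exact mul_le_of_le_one_right (norm_nonneg _) (hu n) |>.trans (ha n (mem_Icc.1 hn).1)
    _ = M * ∑ n ∈ Icc 1 N, q ^ n := (mul_sum _ _ _).symm
    _ ≤ M * (2 * q) := by gcongr; exact sum_Icc_one_pow_le_two_mul hq0 hq N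
    _ = 2 * M * q := by ring

lemma isCompact_rect (α β : ℝ) : IsCompact (rect α β) := by
  have : rect α β = Set.Icc (-α) α ×ℂ Set.Icc (-β) β := by
    ext z; simp [rect, Complex.mem_reProdIm, abs_le]
  exact this ▸ isCompact_Icc.reProdIm isCompact_Icc

/-- Fourier coefficients of a 1-periodic analytic function on a rectangle:
`|g_n| ≤ ‖g‖_D e^{−2πβn}` for `n ≥ 1`, and if `g` has a real zero in `[−α, α]`
then `|g₀| ≤ 4 ‖g‖_D e^{−2πβ}`. -/
theorem fourier_coefficients_bound (α β : ℝ) (hα : 1 ≤ α) (hβ : 1 ≤ β)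
    (g : ℂ → ℂ) (g₀ : ℂ) (gn : ℕ → ℂ) (S₁ S₂ : ℂ → ℂ)
    (hS₁ : TendstoUniformlyOn
      (fun N : ℕ => fun τ : ℂ => ∑ n ∈ Finset.Icc 1 N,
        gn n * Complex.exp (-(2 * Real.pi * (n : ℂ) * Complex.I * τ)))
      S₁ atTop (rect α β))
    (hS₂ : TendstoUniformlyOn
      (fun N : ℕ => fun τ : ℂ => ∑ n ∈ Finset.Icc 1 N,
        (starRingEnd ℂ) (gn n) * Complex.exp (2 * Real.pi * (n : ℂ) * Complex.I * τ))
      S₂ atTop (rect α β))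
    (hg : ∀ τ ∈ rect α β, g τ = g₀ + S₁ τ + S₂ τ) :
    (∀ n : ℕ, 1 ≤ n →
      ‖gn n‖ ≤
        (⨆ τ ∈ rect α β, ‖g τ‖) * Real.exp (-(2 * Real.pi * β * n))) ∧
    ((∃ τh : ℝ, τh ∈ Set.Icc (-α) α ∧ g (τh : ℂ) = 0) →
      ‖g₀‖ ≤
        4 * (⨆ τ ∈ rect α β, ‖g τ‖) * Real.exp (-(2 * Real.pi * β))) := by
  set M := ⨆ τ ∈ rect α β, ‖g τ‖
  have hP : TendstoUniformlyOn (trigPartialSum g₀ gn (starRingEnd ℂ ∘ gn)) g atTop (rect α β) :=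
    (((tendsto_const_nhds.tendstoUniformlyOn_const _).add hS₁).add hS₂).congr_right
      fun τ hτ => (hg τ hτ).symm
  have hgM : ∀ τ ∈ rect α β, ‖g τ‖ ≤ M := fun τ hτ => le_biSup_of_bddAbove_image
    ((isCompact_rect α β).image_of_continuousOn (hP.continuousOn (.of_forall fun N =>
      (continuous_trigPartialSum _ _ _ N).continuousOn)).norm).bddAbove hτ
  have hcoeff : ∀ n, 1 ≤ n → ‖gn n‖ ≤ M * Real.exp (-(2 * π * β * n)) :=
    fun n hn => norm_coeff_le_of_tendstoUniformlyOn hP (fun t ht =>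
      ⟨by simpa [abs_of_nonneg ht.1] using ht.2.trans hα,
        by simp [abs_of_nonneg (zero_le_one.trans hβ)]⟩) hgM hn
  refine ⟨hcoeff, ?_⟩
  rintro ⟨τh, hτh, hzero⟩
  have hτ : (τh : ℂ) ∈ rect α β :=
    ⟨by simpa using abs_le.2 hτh, by simpa using zero_le_one.trans hβ⟩
  set q := Real.exp (-(2 * π * β))
  have hq : q ≤ 1 / 2 := exp_neg_two_pi_mul_le_half hβ
  have hM : 0 ≤ M := Real.iSup_nonneg fun τ => Real.iSup_nonneg fun _ => norm_nonneg (g τ)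
  have hgq : ∀ n, 1 ≤ n → ‖gn n‖ ≤ M * q ^ n := fun n hn => by
    rw [← Real.exp_nat_mul]; convert hcoeff n hn using 3; ring
  have hS₁τ : ‖S₁ τh‖ ≤ 2 * M * q := norm_le_of_tendsto_sum_Icc hM (Real.exp_pos _).le hq hgq
    (fun n => by simp [Complex.norm_exp]) (hS₁.tendsto_at hτ)
  have hS₂τ : ‖S₂ τh‖ ≤ 2 * M * q := norm_le_of_tendsto_sum_Icc hM (Real.exp_pos _).le hq
    (fun n hn => (Complex.norm_conj (gn n)).trans_le (hgq n hn))
    (fun n => by simp [Complex.norm_exp]) (hS₂.tendsto_at hτ)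
  have hg₀ : g₀ = -(S₁ τh + S₂ τh) := by linear_combination hzero - hg _ hτ
  calc ‖g₀‖ ≤ ‖S₁ τh‖ + ‖S₂ τh‖ := by rw [hg₀, norm_neg]; exact norm_add_le _ _
    _ ≤ 4 * M * q := by linarith
end
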